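/- arXiv:2508.06695 — 4 statements merged into one kernel-verified Lean document; each statement's English description precedes it below -/
import Mathlib

section
/- Let σ be an automorphism of a commutative ring S, let m, k ∈ ℕ, and let α, b ∈ S be non-zero-divisors satisfying α·b = σ^m(α)·σ^k(b). Then for all s, ℓ ∈ ℕ, writing z = ⌊sk/m⌋ and [sk]_m = sk − zm, one has σ^{[sk]_m}(N_ℓ^{σ^k}(α)) · ∏_{j=1}^{z} σ^{sk−jm}(b) = σ^{sk}(N_ℓ^{σ^k}(α)) · ∏_{j=1}^{z} σ^{sk−jm+ℓk}(b). -/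
open Finset

noncomputable section

namespace PetitFormal

variable {S : Type*}

/-- Partial norm `N_i^τ(β) = ∏_{j=0}^{i-1} τ^j(β)`. -/
def pnorm [CommRing S] (τ : RingAut S) (i : ℕ) (β : S) : S :=
  ∏ j ∈ Finset.range i, (τ ^ j) β

/-- Multiplication in the skew polynomial ring `S[t;σ]`, with `t·a = σ(a)·t`,
modelled on finitely supported functions `ℕ →₀ S`. -/
def skewMul [CommRing S] (σ : RingAut S) (x y : ℕ →₀ S) : ℕ →₀ S :=
  x.sum fun i c => y.sum fun j d => Finsupp.single (i + j) (c * (σ ^ i) d)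

/-- Embedding of degree `< m` polynomials into `ℕ →₀ S`. -/
def toPoly [CommRing S] {m : ℕ} (x : Fin m → S) : ℕ →₀ S :=
  ∑ i : Fin m, Finsupp.single (i : ℕ) (x i)

/-- One pass of right division by the monic polynomial `f = t^m - f0(t)`:
`reduceAux σ m f0 K` reduces a skew polynomial supported in `[0, m+K)`
to one supported in `[0, m)`, using `t^{m+j} ≡ ∑_i σ^j(f0 i) t^{j+i}` (mod_r f). -/
def reduceAux [CommRing S] (σ : RingAut S) (m : ℕ) (f0 : Fin m → S) :
    ℕ → (ℕ →₀ S) → (ℕ →₀ S)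
  | 0, x => x
  | K + 1, x =>
      reduceAux σ m f0 K
        (x - Finsupp.single (m + K) (x (m + K))
          + ∑ j : Fin m, Finsupp.single (K + (j : ℕ)) (x (m + K) * (σ ^ K) (f0 j)))

/-- Multiplication in the (generally nonassociative) Petit algebra
`S_f = S[t;σ]/S[t;σ](t^m - f0(t))`: multiply in `S[t;σ]` and reduce by right
division by `f = t^m - f0(t)`. -/
def petitMul [CommRing S] (σ : RingAut S) (m : ℕ) (f0 : Fin m → S)
    (x y : Fin m → S) : Fin m → S :=
  fun d => (reduceAux σ m f0 m (skewMul σ (toPoly x) (toPoly y))) (d : ℕ)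

/-- The coefficient vector of the constant `a`, so that `t^m - f0 = t^m - a`. -/
def constF [CommRing S] (m : ℕ) (a : S) : Fin m → S :=
  fun i => if (i : ℕ) = 0 then a else 0

/-- Multiplication in the Petit algebra `S_a = S[t;σ]/S[t;σ](t^m - a)`. -/
def petitMulC [CommRing S] (σ : RingAut S) (m : ℕ) (a : S) :
    (Fin m → S) → (Fin m → S) → (Fin m → S) :=
  petitMul σ m (constF m a)

/-- The monomial `c t^k` as an element of the Petit algebra (zero if `k ≥ m`). -/
def mono [CommRing S] (m : ℕ) (c : S) (k : ℕ) : Fin m → S :=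
  fun i => if (i : ℕ) = k then c else 0

/-- The identity `1 = 1·t^0` of the Petit algebra. -/
def pone [CommRing S] (m : ℕ) : Fin m → S := mono m 1 0

/-- Left-nested power `L(z,s) = z(z(⋯(z)))` (`s` factors) in the Petit algebra. -/
def lpow [CommRing S] (σ : RingAut S) (m : ℕ) (f0 : Fin m → S) (z : Fin m → S) :
    ℕ → Fin m → S
  | 0 => pone m
  | s + 1 => petitMul σ m f0 z (lpow σ m f0 z s)

/-- `G` is a (unital) ring homomorphism from the Petit algebra `S_f` to `S_g`. -/
def IsPetitHom [CommRing S] (σ : RingAut S) (m : ℕ) (f0 g0 : Fin m → S)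
    (G : (Fin m → S) → (Fin m → S)) : Prop :=
  (∀ x y, G (x + y) = G x + G y) ∧
  (∀ x y, G (petitMul σ m f0 x y) = petitMul σ m g0 (G x) (G y)) ∧
  G (pone m) = pone m

/-- `G` is a (unital) ring endomorphism of the skew polynomial ring `S[t;σ]`. -/
def IsSkewHom [CommRing S] (σ : RingAut S) (G : (ℕ →₀ S) → (ℕ →₀ S)) : Prop :=
  (∀ x y, G (x + y) = G x + G y) ∧
  (∀ x y, G (skewMul σ x y) = skewMul σ (G x) (G y)) ∧
  G (Finsupp.single 0 1) = Finsupp.single 0 1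

/-- `G` is a (unital) ring homomorphism from `S[t;σ]` to the Petit algebra `S_g`. -/
def IsSkewToPetitHom [CommRing S] (σ : RingAut S) (m : ℕ) (g0 : Fin m → S)
    (G : (ℕ →₀ S) → (Fin m → S)) : Prop :=
  (∀ x y, G (x + y) = G x + G y) ∧
  (∀ x y, G (skewMul σ x y) = petitMul σ m g0 (G x) (G y)) ∧
  G (Finsupp.single 0 1) = pone m

/-- The monomial map `G_{τ,α,k}` on `S[t;σ]`:
`∑ a_i t^i ↦ ∑ τ(a_i) (α t^k)^i = ∑ τ(a_i) N_i^{σ^k}(α) t^{ik}`. -/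
def skewMonomialMap [CommRing S] (σ τ : RingAut S) (α : S) (k : ℕ)
    (x : ℕ →₀ S) : ℕ →₀ S :=
  x.sum fun i c => Finsupp.single (i * k) (τ c * pnorm (σ ^ k) i α)

/-- The monomial map `G_{τ,α,k}` from `S[t;σ]` into the Petit algebra `S_g`:
`∑ a_i t^i ↦ ∑ τ(a_i) (α t^k)^i`, powers computed by left nesting. -/
def skewToPetitMonomialMap [CommRing S] (σ τ : RingAut S) (m : ℕ)
    (g0 : Fin m → S) (α : S) (k : ℕ) (x : ℕ →₀ S) : Fin m → S :=
  x.sum fun i c => τ c • lpow σ m g0 (mono m α k) i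

/-- The monomial map `G_{τ,α,k}` between Petit algebras of degree `m`:
`∑_{i<m} a_i t^i ↦ ∑_{i<m} τ(a_i) (α t^k)^i`, powers computed by left nesting
in the codomain `S_g`. -/
def petitMonomialMap [CommRing S] (σ τ : RingAut S) (m : ℕ)
    (g0 : Fin m → S) (α : S) (k : ℕ) (x : Fin m → S) : Fin m → S :=
  ∑ i : Fin m, τ (x i) • lpow σ m g0 (mono m α k) (i : ℕ)

/-- The Hamming weight: the number of nonzero coefficients. -/
def hwt [CommRing S] {m : ℕ} (x : Fin m → S) : ℕ := by
  classical exact (Finset.univ.filter fun i => x i ≠ 0).card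

end PetitFormal

open PetitFormal

/-- Key combinatorial identity (Lemma `L:keystep`). -/
theorem stmt1 {S : Type*} [CommRing S] (σ : RingAut S) (m k : ℕ) (hm : 1 ≤ m)
    (α b : S) (hα : α ∈ nonZeroDivisors S) (hb : b ∈ nonZeroDivisors S)
    (h : α * b = (σ ^ m) α * (σ ^ k) b) (s ℓ : ℕ) :
    (σ ^ (s * k % m)) (pnorm (σ ^ k) ℓ α) *
        ∏ j ∈ Finset.Icc 1 (s * k / m), (σ ^ (s * k - j * m)) b
      = (σ ^ (s * k)) (pnorm (σ ^ k) ℓ α) *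
        ∏ j ∈ Finset.Icc 1 (s * k / m), (σ ^ (s * k - j * m + ℓ * k)) b := by

  have comp : ∀ (a c : ℕ) (x : S), (σ ^ (a + c)) x = (σ ^ a) ((σ ^ c) x) := by
    intro a c x; rw [pow_add]; rfl
  have star : pnorm (σ ^ k) ℓ α * b
      = (σ ^ m) (pnorm (σ ^ k) ℓ α) * (σ ^ (ℓ * k)) b := by
    induction ℓ with
    | zero => simp [pnorm]
    | succ n ih =>
      have e1 : ((σ ^ k) ^ n) α = (σ ^ (n * k)) α := by rw [← pow_mul, mul_comm]
      have hh : (σ ^ (n * k)) (α * b) = (σ ^ (n * k + m)) α * (σ ^ (n * k + k)) b := by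
        rw [h, map_mul, ← comp, ← comp]
      have e2 : (σ ^ (n * k + m)) α = (σ ^ m) ((σ ^ (n * k)) α) := by
        rw [add_comm, comp]
      rw [pnorm, Finset.prod_range_succ, ← pnorm]
      calc pnorm (σ^k) n α * ((σ^k)^n) α * b
          = (pnorm (σ^k) n α * b) * (σ^(n*k)) α := by rw [e1]; ring
        _ = ((σ^m) (pnorm (σ^k) n α) * (σ^(n*k)) b) * (σ^(n*k)) α := by rw [ih]
        _ = (σ^m) (pnorm (σ^k) n α) * (σ^(n*k)) (α * b) := by rw [map_mul]; ring
        _ = (σ^m) (pnorm (σ^k) n α) * ((σ^m) ((σ^(n*k)) α) * (σ^(n*k+k)) b) := by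
            rw [hh, e2]
        _ = (σ^m) (pnorm (σ^k) n α * ((σ^k)^n) α) * (σ^((n+1)*k)) b := by
            rw [map_mul, e1]
            have : (n+1)*k = n*k+k := by ring
            rw [this]; ring
  set N := pnorm (σ ^ k) ℓ α with hN
  have main : ∀ (z T : ℕ), z * m ≤ T →
      (σ ^ (T - z * m)) N * ∏ j ∈ Finset.Icc 1 z, (σ ^ (T - j * m)) b
        = (σ ^ T) N * ∏ j ∈ Finset.Icc 1 z, (σ ^ (T - j * m + ℓ * k)) b := by
    intro z
    induction z with
    | zero => intro T hT; simp
    | succ z ih =>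
      intro T hT
      have hz : z * m ≤ T := by nlinarith
      have h1 : (1:ℕ) ≤ z + 1 := by omega
      rw [Finset.prod_Icc_succ_top h1, Finset.prod_Icc_succ_top h1]
      set a := T - (z + 1) * m with ha
      have key : (σ ^ a) N * (σ ^ a) b
          = (σ ^ (T - z * m)) N * (σ ^ (a + ℓ * k)) b := by
        have := congrArg (σ ^ a) star
        rw [map_mul, map_mul, ← comp, ← comp] at this
        have e3 : a + m = T - z * m := by
          have : (z+1)*m = z*m + m := by ring
          omega
        rw [e3] at this
        exact this
      calc (σ ^ a) N * ((∏ j ∈ Finset.Icc 1 z, (σ ^ (T - j * m)) b) * (σ ^ a) b)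
          = ((σ ^ a) N * (σ ^ a) b) * ∏ j ∈ Finset.Icc 1 z, (σ ^ (T - j * m)) b := by
            ring
        _ = ((σ ^ (T - z * m)) N * ∏ j ∈ Finset.Icc 1 z, (σ ^ (T - j * m)) b)
              * (σ ^ (a + ℓ * k)) b := by rw [key]; ring
        _ = ((σ ^ T) N * ∏ j ∈ Finset.Icc 1 z, (σ ^ (T - j * m + ℓ * k)) b)
              * (σ ^ (a + ℓ * k)) b := by rw [ih T hz]
        _ = (σ ^ T) N *
              ((∏ j ∈ Finset.Icc 1 z, (σ ^ (T - j * m + ℓ * k)) b)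
                * (σ ^ (T - (z + 1) * m + ℓ * k)) b) := by rw [ha]; ring
  have hmod : s * k % m = s * k - (s * k / m) * m := by
    have h1 := Nat.div_add_mod (s * k) m
    have h2 : s * k / m * m = m * (s * k / m) := Nat.mul_comm _ _
    omega
  rw [hmod]
  exact main (s * k / m) (s * k) (Nat.div_mul_le_self _ _)
end
end

section
/- Let S be a commutative ring with automorphism σ, let m ∈ ℕ with m ≥ 1, let b ∈ S be a non-zero-divisor, and consider the nonassociative Petit algebra S_b = S[t;σ]/S[t;σ](t^m − b). Let α ∈ S be a non-zero-divisor and 1 ≤ k < m. If α·b = σ^m(α)·σ^k(b), then the element z = α t^k is power associative in S_b, and for every s ∈ ℕ its s-th power equals N_s^{σ^k}(α) · ∏_{i=1}^{⌊sk/m⌋} σ^{sk−im}(b) · t^{[sk]_m}, where [sk]_m is the residue of sk modulo m in [0, m−1]. -/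
open Finset

noncomputable section

open PetitFormal

namespace StmtAux

open PetitFormal Finsupp

variable {S : Type*} [CommRing S]

theorem dm_unique {Q R m n : ℕ} (hm : 0 < m) (hR : R < m) (hn : n = Q * m + R) :
    n / m = Q ∧ n % m = R := by
  subst hn
  rw [mul_comm, Nat.mul_add_div hm, Nat.mul_add_mod, Nat.div_eq_of_lt hR,
    Nat.mod_eq_of_lt hR, add_zero]
  exact ⟨rfl, rfl⟩

theorem pow_apply_pow (σ : RingAut S) (a b : ℕ) (x : S) :
    (σ ^ a) ((σ ^ b) x) = (σ ^ (a + b)) x := by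
  rw [pow_add]; rfl

theorem pow_eq (σ : RingAut S) {e1 e2 : ℕ} (h : e1 = e2) (x : S) :
    (σ ^ e1) x = (σ ^ e2) x := by rw [h]

theorem toPoly_mono {m : ℕ} (c : S) {j : ℕ} (hj : j < m) :
    toPoly (mono m c j) = Finsupp.single j c := by
  rw [toPoly]
  rw [Finset.sum_eq_single (⟨j, hj⟩ : Fin m)]
  · simp [mono]
  · intro i _ hi
    have : (i : ℕ) ≠ j := fun hc => hi (Fin.ext hc)
    simp [mono, this]
  · simp

theorem skewMul_single (σ : RingAut S) (j l : ℕ) (c d : S) :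
    skewMul σ (Finsupp.single j c) (Finsupp.single l d)
      = Finsupp.single (j + l) (c * (σ ^ j) d) := by
  rw [skewMul, Finsupp.sum_single_index, Finsupp.sum_single_index]
  · simp
  · simp

theorem reduceAux_low (σ : RingAut S) (m : ℕ) (f0 : Fin m → S) (K : ℕ)
    {p : ℕ} (hp : p < m) (e : S) :
    reduceAux σ m f0 K (Finsupp.single p e) = Finsupp.single p e := by
  induction K with
  | zero => rfl
  | succ K ih =>
    rw [reduceAux]
    have hne : p ≠ m + K := by omega
    rw [Finsupp.single_apply_eq_zero.mpr (fun hc => absurd hc.symm (by omega))]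
    simp only [Finsupp.single_zero, zero_mul, Finset.sum_const_zero, sub_zero, add_zero]
    exact ih

theorem reduceAux_high (σ : RingAut S) {m : ℕ} (hm : 1 ≤ m) (b : S) (K : ℕ)
    {n : ℕ} (hn1 : m ≤ n) (hn2 : n < m + K) (hn3 : n < m + m) (e : S) :
    reduceAux σ m (constF m b) K (Finsupp.single n e)
      = Finsupp.single (n - m) (e * (σ ^ (n - m)) b) := by
  induction K with
  | zero => omega
  | succ K ih =>
    rw [reduceAux]
    by_cases hcase : n = m + K
    · subst hcase
      rw [Finsupp.single_eq_same]
      have hsum : (∑ j : Fin m, Finsupp.single (K + (j : ℕ))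
          (e * (σ ^ K) (constF m b j))) = Finsupp.single K (e * (σ ^ K) b) := by
        rw [Finset.sum_eq_single (⟨0, hm⟩ : Fin m)]
        · simp [constF]
        · intro i _ hi
          have : (i : ℕ) ≠ 0 := fun hc => hi (Fin.ext hc)
          simp [constF, this]
        · simp
      rw [hsum, sub_self, zero_add]
      have hK : K < m := by omega
      have : m + K - m = K := by omega
      rw [this]
      exact reduceAux_low σ m _ K hK _
    · rw [Finsupp.single_apply_eq_zero.mpr (fun hc => absurd hc.symm (by omega))]
      simp only [Finsupp.single_zero, zero_mul, Finset.sum_const_zero, sub_zero, add_zero]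
      exact ih (by omega)

/-- carry factor -/
def Efac (σ : RingAut S) (m : ℕ) (b : S) (u v : ℕ) : S :=
  if u + v < m then 1 else (σ ^ (u + v - m)) b

/-- residue of a sum -/
def rr (m u v : ℕ) : ℕ := if u + v < m then u + v else u + v - m

theorem rr_lt {m u v : ℕ} (hu : u < m) (hv : v < m) : rr m u v < m := by
  rw [rr]; split <;> omega

theorem rr_mod {m u v : ℕ} (hu : u < m) (hv : v < m) : (u + v) % m = rr m u v := by
  rw [rr]; split
  · exact Nat.mod_eq_of_lt (by omega)
  · rw [Nat.mod_eq_sub_mod (by omega), Nat.mod_eq_of_lt (by omega)]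

theorem mul_mono (σ : RingAut S) {m : ℕ} (hm : 1 ≤ m) (b : S) (c d : S)
    {j l : ℕ} (hj : j < m) (hl : l < m) :
    petitMulC σ m b (mono m c j) (mono m d l)
      = mono m (c * (σ ^ j) d * Efac σ m b j l) (rr m j l) := by
  funext i
  simp only [petitMulC, petitMul]
  rw [toPoly_mono c hj, toPoly_mono d hl, skewMul_single]
  by_cases hcase : j + l < m
  · rw [reduceAux_low σ m _ m hcase]
    rw [Efac, if_pos hcase, rr, if_pos hcase, mul_one]
    rw [Finsupp.single_apply, mono]
    simp [eq_comm]
  · rw [reduceAux_high σ hm b m (by omega) (by omega) (by omega)]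
    rw [Efac, if_neg hcase, rr, if_neg hcase]
    rw [Finsupp.single_apply, mono]
    simp [eq_comm]

end StmtAux
namespace StmtAux

open PetitFormal Finsupp

variable {S : Type*} [CommRing S]

theorem rr_comm (m u v : ℕ) : rr m u v = rr m v u := by
  rw [rr, rr, Nat.add_comm]

theorem Efac_comm (σ : RingAut S) (m : ℕ) (b : S) (u v : ℕ) :
    Efac σ m b u v = Efac σ m b v u := by
  rw [Efac, Efac, Nat.add_comm]

/-- the coefficient of `z^s` -/
noncomputable def Acoef (σ : RingAut S) (m : ℕ) (b α : S) (k : ℕ) (s : ℕ) : S :=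
  pnorm (σ ^ k) s α * ∏ i ∈ Finset.range (s * k / m), (σ ^ (s * k % m + i * m)) b

theorem pnorm_succ (τ : RingAut S) (n : ℕ) (α : S) :
    pnorm τ (n + 1) α = pnorm τ n α * (τ ^ n) α := by
  rw [pnorm, pnorm, Finset.prod_range_succ]

theorem pnorm_succ' (τ : RingAut S) (n : ℕ) (α : S) :
    pnorm τ (n + 1) α = α * τ (pnorm τ n α) := by
  rw [pnorm, pnorm, Finset.prod_range_succ', map_prod, mul_comm]
  congr 1
  apply Finset.prod_congr rfl
  intro i _
  rw [pow_succ']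
  rfl

theorem key_tele (σ : RingAut S) {m : ℕ} (b α : S) {k : ℕ}
    (hc : ∀ j, (σ ^ j) α * (σ ^ j) b = (σ ^ (j + m)) α * (σ ^ (j + k)) b)
    (q j : ℕ) :
    (σ ^ (j + q * m)) α * ∏ i ∈ Finset.range q, (σ ^ (k + j + i * m)) b
      = (σ ^ j) α * ∏ i ∈ Finset.range q, (σ ^ (j + i * m)) b := by
  induction q with
  | zero => simp
  | succ q ih =>
    rw [Finset.prod_range_succ, Finset.prod_range_succ]
    have h1 := hc (j + q * m)
    calc (σ ^ (j + (q+1) * m)) α * ((∏ i ∈ Finset.range q, (σ ^ (k + j + i * m)) b) *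
            (σ ^ (k + j + q * m)) b)
        = ((σ ^ (j + q*m + m)) α * (σ ^ (j + q*m + k)) b) *
            ∏ i ∈ Finset.range q, (σ ^ (k + j + i * m)) b := by
          rw [show j + (q+1)*m = j + q*m + m by ring, show k + j + q*m = j + q*m + k by ring]
          ring
      _ = ((σ ^ (j + q*m)) α * (σ ^ (j + q*m)) b) *
            ∏ i ∈ Finset.range q, (σ ^ (k + j + i * m)) b := by rw [← h1]
      _ = ((σ ^ (j + q*m)) α * ∏ i ∈ Finset.range q, (σ ^ (k + j + i * m)) b) *
            (σ ^ (j + q*m)) b := by ring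
      _ = (σ ^ j) α * ((∏ i ∈ Finset.range q, (σ ^ (j + i * m)) b) * (σ ^ (j + q*m)) b) := by
          rw [ih]; ring

theorem succ_div_mod {m k : ℕ} (hm : 1 ≤ m) (hkm : k < m) (s : ℕ) :
    ((s+1) * k) % m = rr m k (s * k % m) ∧
    ((s+1) * k) / m = (if k + s * k % m < m then s * k / m else s * k / m + 1) := by
  have h1 : m * (s * k / m) + s * k % m = s * k := Nat.div_add_mod (s * k) m
  have hr : s * k % m < m := Nat.mod_lt _ (by omega)
  have hsk : (s+1) * k = s * k + k := by ring
  rw [rr]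
  by_cases hcase : k + s * k % m < m
  · rw [if_pos hcase, if_pos hcase]
    have := dm_unique (m := m) (n := (s+1)*k) (Q := s*k/m) (R := k + s*k%m) (by omega) (by omega)
      (by rw [hsk]; have e1 : (s*k/m)*m = m*(s*k/m) := Nat.mul_comm _ _; omega)
    exact ⟨this.2, this.1⟩
  · rw [if_neg hcase, if_neg hcase]
    have := dm_unique (m := m) (n := (s+1)*k) (Q := s*k/m + 1) (R := k + s*k%m - m) (by omega) (by omega)
      (by
        rw [hsk]
        have e1 : (s*k/m + 1)*m = m*(s*k/m) + m := by ring
        omega)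
    exact ⟨this.2, this.1⟩

end StmtAux
namespace StmtAux

open PetitFormal Finsupp

variable {S : Type*} [CommRing S]

/-- left recursion for the coefficient (no use of the compatibility `h`) -/
theorem recL (σ : RingAut S) {m : ℕ} (hm : 1 ≤ m) (b α : S) {k : ℕ} (hkm : k < m) (s : ℕ) :
    α * (σ ^ k) (Acoef σ m b α k s) * Efac σ m b k (s * k % m)
      = Acoef σ m b α k (s + 1) := by
  have hr : s * k % m < m := Nat.mod_lt _ (by omega)
  obtain ⟨hmod, hdiv⟩ := succ_div_mod hm hkm s
  rw [Acoef, Acoef, hmod, hdiv, map_mul, map_prod]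
  have hprod : ∀ i ∈ Finset.range (s * k / m),
      (σ ^ k) ((σ ^ (s * k % m + i * m)) b) = (σ ^ (k + s * k % m + i * m)) b := by
    intro i _
    rw [pow_apply_pow]
    exact pow_eq σ (by ring) b
  rw [Finset.prod_congr rfl hprod, rr, Efac, pnorm_succ']
  by_cases hcase : k + s * k % m < m
  · rw [if_pos hcase, if_pos hcase, if_pos hcase, mul_one]
    ring
  · rw [if_neg hcase, if_neg hcase, if_neg hcase]
    rw [Finset.prod_range_succ']
    have hp2 : ∀ i ∈ Finset.range (s * k / m),
        (σ ^ (k + s * k % m - m + (i+1) * m)) b = (σ ^ (k + s * k % m + i * m)) b := by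
      intro i _
      refine pow_eq σ ?_ b
      have e : (i+1) * m = i * m + m := by ring
      omega
    rw [Finset.prod_congr rfl hp2, show k + s * k % m - m + 0 * m = k + s * k % m - m by omega]
    ring

/-- right recursion for the coefficient (uses the compatibility `h`) -/
theorem recR (σ : RingAut S) {m : ℕ} (hm : 1 ≤ m) (b α : S) {k : ℕ} (hkm : k < m)
    (hc : ∀ j, (σ ^ j) α * (σ ^ j) b = (σ ^ (j + m)) α * (σ ^ (j + k)) b) (s : ℕ) :
    Acoef σ m b α k s * (σ ^ (s * k % m)) α * Efac σ m b (s * k % m) k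
      = Acoef σ m b α k (s + 1) := by
  have hr : s * k % m < m := Nat.mod_lt _ (by omega)
  have h1 : m * (s * k / m) + s * k % m = s * k := Nat.div_add_mod (s * k) m
  obtain ⟨hmod, hdiv⟩ := succ_div_mod hm hkm s
  have htele := key_tele σ b α hc (s * k / m) (s * k % m)
  have hsk : s * k % m + (s * k / m) * m = s * k := by
    have : (s * k / m) * m = m * (s * k / m) := by ring
    omega
  rw [hsk] at htele
  rw [Acoef, Acoef, hmod, hdiv, pnorm_succ]
  have hpow : ((σ ^ k) ^ s) α = (σ ^ (s * k)) α := by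
    rw [← pow_mul]
    congr 1
    ring
  rw [hpow, rr, Efac]
  by_cases hcase : k + s * k % m < m
  · rw [if_pos hcase, if_pos hcase, if_pos (show s * k % m + k < m by omega), mul_one]
    have hp : ∀ i ∈ Finset.range (s * k / m),
        (σ ^ (k + s * k % m + i * m)) b = (σ ^ (k + (s * k % m) + i * m)) b := fun i _ => rfl
    calc pnorm (σ ^ k) s α * (∏ i ∈ Finset.range (s * k / m), (σ ^ (s * k % m + i * m)) b) *
            (σ ^ (s * k % m)) α
        = pnorm (σ ^ k) s α * ((σ ^ (s * k % m)) α *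
            ∏ i ∈ Finset.range (s * k / m), (σ ^ (s * k % m + i * m)) b) := by ring
      _ = pnorm (σ ^ k) s α * ((σ ^ (s * k)) α *
            ∏ i ∈ Finset.range (s * k / m), (σ ^ (k + s * k % m + i * m)) b) := by rw [← htele]
      _ = pnorm (σ ^ k) s α * (σ ^ (s * k)) α *
            ∏ i ∈ Finset.range (s * k / m), (σ ^ (k + s * k % m + i * m)) b := by ring
  · rw [if_neg hcase, if_neg hcase, if_neg (show ¬ s * k % m + k < m by omega)]
    rw [Finset.prod_range_succ']
    have hp2 : ∀ i ∈ Finset.range (s * k / m),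
        (σ ^ (k + s * k % m - m + (i+1) * m)) b = (σ ^ (k + s * k % m + i * m)) b := by
      intro i _
      refine pow_eq σ ?_ b
      have e : (i+1) * m = i * m + m := by ring
      omega
    rw [Finset.prod_congr rfl hp2,
      pow_eq σ (show k + s * k % m - m + 0 * m = s * k % m + k - m by omega) b]
    calc pnorm (σ ^ k) s α * (∏ i ∈ Finset.range (s * k / m), (σ ^ (s * k % m + i * m)) b) *
            (σ ^ (s * k % m)) α * (σ ^ (s * k % m + k - m)) b
        = pnorm (σ ^ k) s α * ((σ ^ (s * k % m)) α *
            ∏ i ∈ Finset.range (s * k / m), (σ ^ (s * k % m + i * m)) b) *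
            (σ ^ (s * k % m + k - m)) b := by ring
      _ = pnorm (σ ^ k) s α * ((σ ^ (s * k)) α *
            ∏ i ∈ Finset.range (s * k / m), (σ ^ (k + s * k % m + i * m)) b) *
            (σ ^ (s * k % m + k - m)) b := by rw [← htele]
      _ = pnorm (σ ^ k) s α * (σ ^ (s * k)) α *
            ((∏ i ∈ Finset.range (s * k / m), (σ ^ (k + s * k % m + i * m)) b) *
              (σ ^ (s * k % m + k - m)) b) := by ring

end StmtAux
namespace StmtAux

open PetitFormal Finsupp

variable {S : Type*} [CommRing S]

theorem star (σ : RingAut S) {m : ℕ} (b α : S) {k : ℕ} (hkm : k < m)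
    (hc : ∀ j, (σ ^ j) α * (σ ^ j) b = (σ ^ (j + m)) α * (σ ^ (j + k)) b)
    {u v : ℕ} (hu : u < m) (hv : v < m) :
    (σ ^ (u + v)) α * (σ ^ u) (Efac σ m b v k) * Efac σ m b u (rr m v k)
      = Efac σ m b u v * ((σ ^ (rr m u v)) α * Efac σ m b (rr m u v) k) := by
  by_cases h2 : v + k < m
  · rw [show rr m v k = v + k from if_pos h2,
        show Efac σ m b v k = 1 from if_pos h2, map_one, mul_one]
    by_cases h1 : u + v < m
    · rw [show Efac σ m b u v = 1 from if_pos h1,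
          show rr m u v = u + v from if_pos h1, one_mul]
      rw [Efac, Efac]
      by_cases h3 : u + v + k < m
      · rw [if_pos (show u + (v + k) < m by omega), if_pos (show u + v + k < m from h3)]
      · rw [if_neg (show ¬ u + (v + k) < m by omega), if_neg (show ¬ u + v + k < m from h3)]
        rw [pow_eq σ (show u + (v + k) - m = u + v + k - m by omega) b]
    · rw [show Efac σ m b u v = (σ ^ (u + v - m)) b from if_neg h1,
          show rr m u v = u + v - m from if_neg h1]
      rw [show Efac σ m b u (v + k) = (σ ^ (u + (v + k) - m)) b from if_neg (by omega),
          show Efac σ m b (u + v - m) k = 1 from if_pos (by omega), mul_one]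
      have hcj := hc (u + v - m)
      rw [show u + v - m + m = u + v by omega, show u + v - m + k = u + (v + k) - m by omega]
        at hcj
      rw [← hcj]
      ring
  · rw [show rr m v k = v + k - m from if_neg h2,
        show Efac σ m b v k = (σ ^ (v + k - m)) b from if_neg h2,
        pow_apply_pow]
    by_cases h1 : u + v < m
    · rw [show Efac σ m b u v = 1 from if_pos h1,
          show rr m u v = u + v from if_pos h1, one_mul]
      rw [show Efac σ m b u (v + k - m) = 1 from if_pos (by omega), mul_one,
          show Efac σ m b (u + v) k = (σ ^ (u + v + k - m)) b from if_neg (by omega),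
          pow_eq σ (show u + (v + k - m) = u + v + k - m by omega) b]
    · rw [show Efac σ m b u v = (σ ^ (u + v - m)) b from if_neg h1,
          show rr m u v = u + v - m from if_neg h1]
      have hcj := hc (u + v - m)
      rw [show u + v - m + m = u + v by omega] at hcj
      by_cases h5 : u + v + k < m + m
      · rw [show Efac σ m b u (v + k - m) = 1 from if_pos (by omega), mul_one,
            show Efac σ m b (u + v - m) k = 1 from if_pos (by omega), mul_one]
        rw [show u + v - m + k = u + (v + k - m) by omega] at hcj
        rw [← hcj]
        ring
      · rw [show Efac σ m b u (v + k - m) = (σ ^ (u + (v + k - m) - m)) b from if_neg (by omega),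
            show Efac σ m b (u + v - m) k = (σ ^ (u + v - m + k - m)) b from if_neg (by omega)]
        rw [show u + v - m + k = u + (v + k - m) by omega] at hcj
        rw [pow_eq σ (show u + (v + k - m) - m = u + v - m + k - m by omega) b, ← hcj]
        ring

theorem mod_add_mod' {m k : ℕ} (hm : 1 ≤ m) (s ℓ : ℕ) :
    ((s + ℓ) * k) % m = rr m (s * k % m) (ℓ * k % m) := by
  rw [← rr_mod (Nat.mod_lt _ (by omega)) (Nat.mod_lt _ (by omega))]
  rw [show (s + ℓ) * k = s * k + ℓ * k by ring, Nat.add_mod]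

theorem Ilem (σ : RingAut S) {m : ℕ} (hm : 1 ≤ m) (b α : S) {k : ℕ} (hkm : k < m)
    (hc : ∀ j, (σ ^ j) α * (σ ^ j) b = (σ ^ (j + m)) α * (σ ^ (j + k)) b)
    (s ℓ : ℕ) :
    Acoef σ m b α k s * (σ ^ (s * k % m)) (Acoef σ m b α k ℓ) *
        Efac σ m b (s * k % m) (ℓ * k % m)
      = Acoef σ m b α k (s + ℓ) := by
  induction ℓ with
  | zero =>
    have h0 : Acoef σ m b α k 0 = 1 := by simp [Acoef, pnorm]
    rw [h0, map_one, mul_one, Nat.zero_mul, Nat.zero_mod,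
        show Efac σ m b (s * k % m) 0 = 1 from if_pos (by
          have := Nat.mod_lt (s * k) (show 0 < m by omega); omega), mul_one, Nat.add_zero]
  | succ ℓ ih =>
    have hrs : s * k % m < m := Nat.mod_lt _ (by omega)
    have hrl : ℓ * k % m < m := Nat.mod_lt _ (by omega)
    obtain ⟨hmodl, _⟩ := succ_div_mod hm hkm ℓ
    rw [show s + (ℓ + 1) = (s + ℓ) + 1 by ring, ← recR σ hm b α hkm hc (s + ℓ), ← ih,
        ← recR σ hm b α hkm hc ℓ, hmodl, map_mul, map_mul, pow_apply_pow,
        mod_add_mod' hm s ℓ, rr_comm m k (ℓ * k % m)]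
    have hstar := star σ b α hkm hc hrs hrl
    linear_combination (Acoef σ m b α k s * (σ ^ (s * k % m)) (Acoef σ m b α k ℓ)) * hstar

end StmtAux
namespace StmtAux

open PetitFormal Finsupp

variable {S : Type*} [CommRing S]

theorem lpow_mono (σ : RingAut S) {m : ℕ} (hm : 1 ≤ m) (b α : S) {k : ℕ}
    (hkm : k < m) (s : ℕ) :
    lpow σ m (constF m b) (mono m α k) s
      = mono m (Acoef σ m b α k s) (s * k % m) := by
  induction s with
  | zero =>
    have h0 : Acoef σ m b α k 0 = 1 := by simp [Acoef, pnorm]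
    rw [lpow, h0, Nat.zero_mul, Nat.zero_mod]
    rfl
  | succ s ih =>
    rw [lpow, ih]
    have hr : s * k % m < m := Nat.mod_lt _ (by omega)
    rw [show petitMul σ m (constF m b) = petitMulC σ m b from rfl,
        mul_mono σ hm b α (Acoef σ m b α k s) hkm hr,
        recL σ hm b α hkm s, (succ_div_mod hm hkm s).1]

theorem Acoef_eq (σ : RingAut S) {m : ℕ} (hm : 1 ≤ m) (b α : S) (k s : ℕ) :
    Acoef σ m b α k s
      = pnorm (σ ^ k) s α * ∏ i ∈ Finset.Icc 1 (s * k / m), (σ ^ (s * k - i * m)) b := by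
  rw [Acoef]
  congr 1
  have h1 : m * (s * k / m) + s * k % m = s * k := Nat.div_add_mod _ _
  refine (Finset.prod_nbij' (fun i => s * k / m - i) (fun i => s * k / m - i)
    ?_ ?_ ?_ ?_ ?_).symm
  · intro a ha
    rw [Finset.mem_Icc] at ha
    rw [Finset.mem_range]
    omega
  · intro a ha
    rw [Finset.mem_range] at ha
    rw [Finset.mem_Icc]
    omega
  · intro a ha
    rw [Finset.mem_Icc] at ha
    omega
  · intro a ha
    rw [Finset.mem_range] at ha
    omega
  · intro a ha
    rw [Finset.mem_Icc] at ha
    refine pow_eq σ ?_ b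
    have e1 : (s * k / m - a) * m = (s * k / m) * m - a * m := Nat.sub_mul _ _ _
    have e2 : a * m ≤ (s * k / m) * m := Nat.mul_le_mul_right _ ha.2
    have e3 : (s * k / m) * m = m * (s * k / m) := Nat.mul_comm _ _
    omega

end StmtAux


/-- Sufficiency in Theorem `T:powerassociative`: if `αb = σ^m(α)σ^k(b)` then
`z = α t^k` is power associative in `S_b = S[t;σ]/S[t;σ](t^m−b)`, and
`z^s = N_s^{σ^k}(α) ∏_{i=1}^{⌊sk/m⌋} σ^{sk−im}(b) · t^{[sk]_m}` for all `s`. -/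
theorem stmt2 {S : Type*} [CommRing S] (σ : RingAut S) (m : ℕ) (hm : 1 ≤ m)
    (b : S) (hb : b ∈ nonZeroDivisors S) (α : S) (hα : α ∈ nonZeroDivisors S)
    (k : ℕ) (hk1 : 1 ≤ k) (hkm : k < m)
    (h : α * b = (σ ^ m) α * (σ ^ k) b) :
    (∀ s ℓ : ℕ,
        petitMulC σ m b (lpow σ m (constF m b) (mono m α k) s)
            (lpow σ m (constF m b) (mono m α k) ℓ)
          = lpow σ m (constF m b) (mono m α k) (s + ℓ)) ∧
    (∀ s : ℕ,
        lpow σ m (constF m b) (mono m α k) s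
          = mono m
              (pnorm (σ ^ k) s α *
                ∏ i ∈ Finset.Icc 1 (s * k / m), (σ ^ (s * k - i * m)) b)
              (s * k % m)) := by
  have hc : ∀ j, (σ ^ j) α * (σ ^ j) b = (σ ^ (j + m)) α * (σ ^ (j + k)) b := by
    intro j
    have hj := congrArg (fun x => (σ ^ j) x) h
    simp only [map_mul] at hj
    rw [StmtAux.pow_apply_pow σ j m α, StmtAux.pow_apply_pow σ j k b] at hj
    exact hj
  constructor
  · intro s ℓ
    rw [StmtAux.lpow_mono σ hm b α hkm s, StmtAux.lpow_mono σ hm b α hkm ℓ,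
        StmtAux.lpow_mono σ hm b α hkm (s + ℓ),
        StmtAux.mul_mono σ hm b (StmtAux.Acoef σ m b α k s) (StmtAux.Acoef σ m b α k ℓ)
          (Nat.mod_lt _ (by omega)) (Nat.mod_lt _ (by omega)),
        StmtAux.Ilem σ hm b α hkm hc s ℓ, StmtAux.mod_add_mod' hm s ℓ]
  · intro s
    rw [StmtAux.lpow_mono σ hm b α hkm s, StmtAux.Acoef_eq σ hm b α k s]
end
end

section
/- Let S be a commutative ring with automorphism σ, m ≥ 1, b ∈ S a non-zero-divisor, and 1 < k < m. Let r > 0 be the least integer with rk ≥ m. If the element z = α t^k in the Petit algebra S_b = S[t;σ]/S[t;σ](t^m − b), with α a non-zero-divisor, satisfies z^r · z = z · z^r (where z^r is the well-defined r-th power), then α·b = σ^m(α)·σ^k(b). -/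
open Finset

noncomputable section

open PetitFormal

/-!
Since `(r - 1) k < m ≤ r k`, the power `z^r = N_r(α) σ^e(b) t^e`, `e = r k - m < k`, is a
monomial obtained from a single reduction `t^m = b`. Both `z^r z` and `z z^r` are monomials of
degree `e + k`, reduced once more by the same factor `σ^(e+k-m)(b)` if `e + k ≥ m`, so comparing
coefficients gives `c σ^e(α) = α σ^k(c)` for `c = N_r(α) σ^e(b)`. As
`α σ^k(N_r(α)) = N_r(α) σ^(rk)(α)`, cancelling the non-zero-divisor `N_r(α)` and then `σ^e` leaves
`α b = σ^m(α) σ^k(b)`.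
-/

namespace PetitFormal

variable {S : Type*} [CommRing S]

lemma toPoly_mono {m k : ℕ} (c : S) (hk : k < m) :
    toPoly (mono m c k) = Finsupp.single k c := by
  classical
  rw [toPoly, Finset.sum_eq_single (⟨k, hk⟩ : Fin m)]
  · simp [mono]
  · intro i _ hi
    simp [mono, Fin.val_ne_of_ne hi]
  · simp

lemma skewMul_single_single (σ : RingAut S) (i j : ℕ) (c d : S) :
    skewMul σ (Finsupp.single i c) (Finsupp.single j d)
      = Finsupp.single (i + j) (c * (σ ^ i) d) := by
  rw [skewMul, Finsupp.sum_single_index, Finsupp.sum_single_index] <;> simp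

lemma single_apply_coe_eq_mono {m n : ℕ} (c : S) (d : Fin m) :
    (Finsupp.single n c : ℕ →₀ S) d = mono m c n d := by
  classical
  simp [Finsupp.single_apply, mono, eq_comm]

lemma reduceAux_single_of_lt (σ : RingAut S) {m : ℕ} (f0 : Fin m → S) (K : ℕ) {n : ℕ}
    (hn : n < m) (c : S) :
    reduceAux σ m f0 K (Finsupp.single n c) = Finsupp.single n c := by
  induction K with
  | zero => rfl
  | succ K ih =>
    rw [reduceAux, Finsupp.single_eq_of_ne (by omega)]
    simpa using ih

lemma sum_single_mul_constF (σ : RingAut S) {m : ℕ} (hm : 0 < m) (b : S) (K : ℕ) (c : S) :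
    ∑ j : Fin m, Finsupp.single (K + j) (c * (σ ^ K) (constF m b j))
      = Finsupp.single K (c * (σ ^ K) b) := by
  classical
  rw [Finset.sum_eq_single (⟨0, hm⟩ : Fin m)]
  · simp [constF]
  · intro i _ hi
    simp [constF, Fin.val_ne_of_ne hi]
  · simp

lemma reduceAux_constF_single_of_le (σ : RingAut S) {m : ℕ} (b : S) (K : ℕ) {n : ℕ}
    (hmn : m ≤ n) (hn : n < 2 * m) (hnK : n < m + K) (c : S) :
    reduceAux σ m (constF m b) K (Finsupp.single n c)
      = Finsupp.single (n - m) (c * (σ ^ (n - m)) b) := by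
  induction K with
  | zero => omega
  | succ K ih =>
    rw [reduceAux]
    rcases eq_or_ne n (m + K) with rfl | hne
    · rw [Finsupp.single_eq_same, sub_self, zero_add, sum_single_mul_constF σ (by omega),
        Nat.add_sub_cancel_left, reduceAux_single_of_lt σ _ K (by omega)]
    · rw [Finsupp.single_eq_of_ne (by omega)]
      simpa using ih (by omega)

variable (σ : RingAut S) {m : ℕ} (b : S)

lemma petitMulC_mono_mono_of_add_lt {i j : ℕ} (hi : i < m) (hj : j < m) (hij : i + j < m)
    (c d : S) :
    petitMulC σ m b (mono m c i) (mono m d j) = mono m (c * (σ ^ i) d) (i + j) := by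
  funext x
  rw [petitMulC, petitMul, toPoly_mono c hi, toPoly_mono d hj, skewMul_single_single,
    reduceAux_single_of_lt σ _ m hij, single_apply_coe_eq_mono]

lemma petitMulC_mono_mono_of_le_add {i j : ℕ} (hi : i < m) (hj : j < m) (hij : m ≤ i + j)
    (c d : S) :
    petitMulC σ m b (mono m c i) (mono m d j)
      = mono m (c * (σ ^ i) d * (σ ^ (i + j - m)) b) (i + j - m) := by
  funext x
  rw [petitMulC, petitMul, toPoly_mono c hi, toPoly_mono d hj, skewMul_single_single,
    reduceAux_constF_single_of_le σ b m hij (by omega) (by omega), single_apply_coe_eq_mono]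

lemma mono_injective {n : ℕ} (hn : n < m) : Function.Injective fun c : S => mono m c n := by
  intro c d h
  simpa [mono] using congrFun h ⟨n, hn⟩

lemma pnorm_succ (τ : RingAut S) (s : ℕ) (α : S) :
    pnorm τ (s + 1) α = α * τ (pnorm τ s α) := by
  rw [pnorm, pnorm, Finset.prod_range_succ', map_prod, pow_zero, mul_comm]
  congr 1
  exact Finset.prod_congr rfl fun j _ => by rw [pow_succ']; rfl

lemma pnorm_succ' (τ : RingAut S) (s : ℕ) (α : S) :
    pnorm τ (s + 1) α = pnorm τ s α * (τ ^ s) α :=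
  Finset.prod_range_succ _ _

lemma mul_map_pnorm (τ : RingAut S) (s : ℕ) (α : S) :
    α * τ (pnorm τ s α) = pnorm τ s α * (τ ^ s) α := by
  rw [← pnorm_succ, pnorm_succ']

lemma ringAut_apply_mem_nonZeroDivisors (τ : RingAut S) {a : S} (ha : a ∈ nonZeroDivisors S) :
    τ a ∈ nonZeroDivisors S :=
  MulEquivClass.map_nonZeroDivisors τ ▸ Submonoid.mem_map_of_mem τ ha

lemma pnorm_mem_nonZeroDivisors (τ : RingAut S) (s : ℕ) {α : S} (hα : α ∈ nonZeroDivisors S) :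
    pnorm τ s α ∈ nonZeroDivisors S :=
  prod_mem fun j _ => ringAut_apply_mem_nonZeroDivisors (τ ^ j) hα

lemma lpow_mono_of_mul_lt (α : S) {k s : ℕ} (hs : s * k < m) :
    lpow σ m (constF m b) (mono m α k) s = mono m (pnorm (σ ^ k) s α) (s * k) := by
  induction s with
  | zero => simp [lpow, pone, pnorm]
  | succ s ih =>
    have hsk : s * k < m := lt_of_le_of_lt (Nat.mul_le_mul_right k s.le_succ) hs
    rw [lpow, ih hsk, ← petitMulC, petitMulC_mono_mono_of_add_lt σ b (by nlinarith) hsk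
      (by nlinarith), ← pnorm_succ, Nat.succ_mul, add_comm (s * k)]

/-- The first power of `α t^k` whose degree reaches `m` wraps around once through `t^m = b`. -/
lemma lpow_mono_succ_of_mul_lt_of_le (α : S) {k s : ℕ} (hk : k < m) (hs : s * k < m)
    (hm : m ≤ (s + 1) * k) :
    lpow σ m (constF m b) (mono m α k) (s + 1)
      = mono m (pnorm (σ ^ k) (s + 1) α * (σ ^ ((s + 1) * k - m)) b) ((s + 1) * k - m) := by
  rw [lpow, lpow_mono_of_mul_lt σ b α hs, ← petitMulC,
    petitMulC_mono_mono_of_le_add σ b hk hs (by rw [Nat.succ_mul] at hm; omega), ← pnorm_succ,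
    Nat.succ_mul, add_comm (s * k)]

lemma mul_map_eq_of_mono_commute (hb : b ∈ nonZeroDivisors S) {e k : ℕ} (he : e < m)
    (hk : k < m) (c α : S)
    (h : petitMulC σ m b (mono m c e) (mono m α k) = petitMulC σ m b (mono m α k) (mono m c e)) :
    c * (σ ^ e) α = α * (σ ^ k) c := by
  rcases lt_or_ge (e + k) m with hek | hek
  · rw [petitMulC_mono_mono_of_add_lt σ b he hk hek,
      petitMulC_mono_mono_of_add_lt σ b hk he (by omega), add_comm k] at h
    exact mono_injective hek h
  · rw [petitMulC_mono_mono_of_le_add σ b he hk hek,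
      petitMulC_mono_mono_of_le_add σ b hk he (by omega), add_comm k] at h
    exact (mul_cancel_right_mem_nonZeroDivisors (ringAut_apply_mem_nonZeroDivisors _ hb)).mp
      (mono_injective (by omega) h)

end PetitFormal

theorem stmt3_general {S : Type*} [CommRing S] (σ : RingAut S) (m : ℕ)
    (b : S) (hb : b ∈ nonZeroDivisors S) (α : S) (hα : α ∈ nonZeroDivisors S)
    (k : ℕ) (hkm : k < m)
    (r : ℕ) (hrk : m ≤ r * k)
    (hleast : ∀ r' : ℕ, 0 < r' → m ≤ r' * k → r ≤ r')
    (hcomm :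
      petitMulC σ m b (lpow σ m (constF m b) (mono m α k) r) (mono m α k)
        = petitMulC σ m b (mono m α k) (lpow σ m (constF m b) (mono m α k) r)) :
    α * b = (σ ^ m) α * (σ ^ k) b := by
  obtain ⟨s, rfl⟩ : ∃ s, r = s + 1 :=
    Nat.exists_eq_succ_of_ne_zero (by rintro rfl; rw [zero_mul] at hrk; omega)
  have hsk : s * k < m := by
    by_contra! h
    have := hleast s (Nat.pos_of_ne_zero (by rintro rfl; rw [zero_mul] at h; omega)) h
    omega
  rw [lpow_mono_succ_of_mul_lt_of_le σ b α hkm hsk hrk] at hcomm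
  have hsucc : (s + 1) * k = s * k + k := Nat.succ_mul s k
  set e := (s + 1) * k - m
  set N := pnorm (σ ^ k) (s + 1) α
  have key := mul_map_eq_of_mono_commute σ b hb (e := e) (by omega) hkm _ α hcomm
  have hσ : ∀ i j (x : S), (σ ^ i) ((σ ^ j) x) = (σ ^ (i + j)) x := fun i j x => by
    rw [pow_add, RingAut.mul_apply]
  have hN : N ∈ nonZeroDivisors S := pnorm_mem_nonZeroDivisors (σ ^ k) (s + 1) hα
  apply (σ ^ e).injective
  refine (mul_cancel_left_mem_nonZeroDivisors hN).mp ?_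
  calc N * (σ ^ e) (α * b) = N * (σ ^ e) b * (σ ^ e) α := by rw [map_mul]; ring
    _ = α * (σ ^ k) N * (σ ^ (k + e)) b := by rw [key, map_mul, hσ]; ring
    _ = N * (σ ^ (e + m)) α * (σ ^ (e + k)) b := by
      rw [mul_map_pnorm, ← pow_mul, mul_comm k, add_comm k]
      congr 4
      omega
    _ = N * (σ ^ e) ((σ ^ m) α * (σ ^ k) b) := by rw [map_mul, hσ, hσ]; ring

/-- Necessity in Theorem `T:powerassociative`: if `z = α t^k` satisfies
`z^r z = z z^r` for the least `r > 0` with `rk ≥ m`, then `αb = σ^m(α)σ^k(b)`. -/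
theorem stmt3 {S : Type*} [CommRing S] (σ : RingAut S) (m : ℕ) (hm : 1 ≤ m)
    (b : S) (hb : b ∈ nonZeroDivisors S) (α : S) (hα : α ∈ nonZeroDivisors S)
    (k : ℕ) (hk1 : 1 < k) (hkm : k < m)
    (r : ℕ) (hr0 : 0 < r) (hrk : m ≤ r * k)
    (hleast : ∀ r' : ℕ, 0 < r' → m ≤ r' * k → r ≤ r')
    (hcomm :
      petitMulC σ m b (lpow σ m (constF m b) (mono m α k) r) (mono m α k)
        = petitMulC σ m b (mono m α k) (lpow σ m (constF m b) (mono m α k) r)) :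
    α * b = (σ ^ m) α * (σ ^ k) b :=
  stmt3_general σ m b hb α hα k hkm r hrk hleast hcomm
end
end

section
/- Let S be an integral domain, σ ∈ Aut(S) of order n, a, b ∈ S^×, and suppose n ∤ m. Then any nonzero ring homomorphism G : S_a → S_b whose restriction to S is an automorphism τ commuting with σ is monomial of degree one: G(t) = α t for some nonzero α ∈ S. -/
open Finset

noncomputable section

open PetitFormal

/-!
Write `z = G(t)`. For `s < m` the hom property turns `t^s c = σ^s(c) t^s` in `S_a` into
`L(z,s) τ(c) = σ^s(τ c) L(z,s)` in `S_b`, and since `τ` is onto, comparing coefficients shows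
that `L(z,s)` is supported in degrees `≡ s (mod n)`; in particular `z` lives in degrees `≡ 1`,
and `z ≠ 0` because `L(z,m) = G(t^m) = τ(a) ≠ 0`. If the top degree `k` of `z` were `≥ 2`,
let `Q k < m ≤ (Q+1) k`. Over a domain `L(z,Q)` has top degree `Q k`, and reducing
`z · L(z,Q)` modulo `t^m - b` moves its nonzero top coefficient down to degree
`d = (Q+1) k - m`. Unless `d ≡ Q+1`, nothing else lands in degree `d`, which contradicts the
support of `L(z,Q+1)`; and `d ≡ Q+1 ≡ (Q+1) k = m + d` forces `n ∣ m`.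
-/

namespace PetitFormal

variable {S : Type*} [CommRing S]

def skewMulCoeff (σ : RingAut S) {m : ℕ} (x y : Fin m → S) (e : ℕ) : S :=
  ∑ i : Fin m, ∑ j : Fin m, if (i : ℕ) + j = e then x i * (σ ^ (i : ℕ)) (y j) else 0

section Coefficients

variable {m : ℕ}

lemma skewMul_toPoly (σ : RingAut S) (x y : Fin m → S) :
    skewMul σ (toPoly x) (toPoly y)
      = ∑ i : Fin m, ∑ j : Fin m,
          Finsupp.single ((i : ℕ) + j) (x i * (σ ^ (i : ℕ)) (y j)) := by
  unfold skewMul toPoly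
  rw [← Finsupp.sum_finsetSum_index (fun _ => by simp [Finsupp.sum])
    (fun _ _ _ => by rw [← Finsupp.sum_add]; simp [add_mul, Finsupp.single_add])]
  refine Finset.sum_congr rfl fun i _ => ?_
  rw [Finsupp.sum_single_index (by simp [Finsupp.sum]),
    ← Finsupp.sum_finsetSum_index (fun _ => by simp)
      (fun _ _ _ => by simp [mul_add, Finsupp.single_add])]
  refine Finset.sum_congr rfl fun j _ => ?_
  rw [Finsupp.sum_single_index (by simp)]

lemma skewMul_toPoly_apply (σ : RingAut S) (x y : Fin m → S) (e : ℕ) :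
    skewMul σ (toPoly x) (toPoly y) e = skewMulCoeff σ x y e := by
  simp only [skewMul_toPoly, skewMulCoeff, Finset.sum_apply', Finsupp.single_apply]

lemma reduceAux_constF_apply (σ : RingAut S) (hm : 0 < m) (b : S) {K : ℕ} (hK : K ≤ m)
    (x : ℕ →₀ S) {d : ℕ} (hd : d < m) :
    reduceAux σ m (constF m b) K x d
      = x d + if d < K then x (m + d) * (σ ^ d) b else 0 := by
  induction K generalizing x with
  | zero => simp [reduceAux]
  | succ K ih =>
    have hfold : ∑ j : Fin m, Finsupp.single (K + (j : ℕ))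
        (x (m + K) * (σ ^ K) (constF m b j)) = Finsupp.single K (x (m + K) * (σ ^ K) b) := by
      rw [Finset.sum_eq_single (⟨0, hm⟩ : Fin m) (fun j _ hj => by
        simp [constF, Fin.ext_iff.not.mp hj]) (by simp)]
      simp [constF]
    rw [reduceAux, hfold, ih (by omega)]
    simp only [Finsupp.add_apply, Finsupp.sub_apply, Finsupp.single_apply]
    split_ifs <;> first | omega | (subst_vars; ring)

lemma petitMul_constF_apply (σ : RingAut S) (hm : 0 < m) (b : S) (x y : Fin m → S)
    (d : Fin m) :
    petitMul σ m (constF m b) x y d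
      = skewMulCoeff σ x y d + skewMulCoeff σ x y (m + d) * (σ ^ (d : ℕ)) b := by
  rw [petitMul, reduceAux_constF_apply σ hm b le_rfl _ d.isLt, skewMul_toPoly_apply,
    skewMul_toPoly_apply, if_pos d.isLt]

lemma skewMulCoeff_eq_zero {σ : RingAut S} {x y : Fin m → S} {e : ℕ}
    (h : ∀ i j : Fin m, (i : ℕ) + j = e → x i ≠ 0 → y j ≠ 0 → False) :
    skewMulCoeff σ x y e = 0 := by
  refine Finset.sum_eq_zero fun i _ => Finset.sum_eq_zero fun j _ => ?_
  split_ifs with hij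
  · by_cases hx : x i = 0
    · rw [hx, zero_mul]
    by_cases hy : y j = 0
    · rw [hy, map_zero, mul_zero]
    exact (h i j hij hx hy).elim
  · rfl

lemma skewMulCoeff_eq_zero_of_lt {σ : RingAut S} {x y : Fin m → S} {p q e : ℕ}
    (hx : ∀ i, x i ≠ 0 → (i : ℕ) ≤ p) (hy : ∀ j, y j ≠ 0 → (j : ℕ) ≤ q) (he : p + q < e) :
    skewMulCoeff σ x y e = 0 :=
  skewMulCoeff_eq_zero fun i j hij hi hj => by have := hx i hi; have := hy j hj; omega

lemma skewMulCoeff_eq_zero_of_modEq {σ : RingAut S} {x y : Fin m → S} {n r s e : ℕ}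
    (hx : ∀ i, x i ≠ 0 → (i : ℕ) ≡ r [MOD n]) (hy : ∀ j, y j ≠ 0 → (j : ℕ) ≡ s [MOD n])
    (he : ¬ e ≡ r + s [MOD n]) :
    skewMulCoeff σ x y e = 0 :=
  skewMulCoeff_eq_zero fun i j hij hi hj => he (hij ▸ (hx i hi).add (hy j hj))

lemma skewMulCoeff_top {σ : RingAut S} {x y : Fin m → S} {p q : Fin m}
    (hx : ∀ i, x i ≠ 0 → i ≤ p) (hy : ∀ j, y j ≠ 0 → j ≤ q) :
    skewMulCoeff σ x y (p + q) = x p * (σ ^ (p : ℕ)) (y q) := by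
  rw [skewMulCoeff, ← Finset.sum_product', Finset.sum_eq_single (p, q) _ (by simp)]
  · simp
  rintro ⟨i, j⟩ _ hne
  split_ifs with hij
  · by_cases hxi : x i = 0
    · rw [hxi, zero_mul]
    by_cases hyj : y j = 0
    · rw [hyj, map_zero, mul_zero]
    have hi := Fin.le_def.mp (hx i hxi)
    have hj := Fin.le_def.mp (hy j hyj)
    have hij' : (i : ℕ) + j = p + q := hij
    exact (hne (Prod.ext (Fin.ext (show (i : ℕ) = p by omega))
      (Fin.ext (show (j : ℕ) = q by omega)))).elim
  · rfl

end Coefficients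

section Monomials

variable (σ : RingAut S) {m : ℕ}

lemma skewMulCoeff_mono_left (c : S) {p : ℕ} (hp : p < m) (y : Fin m → S) (e : ℕ) :
    skewMulCoeff σ (mono m c p) y e
      = ∑ j : Fin m, if p + (j : ℕ) = e then c * (σ ^ p) (y j) else 0 := by
  rw [skewMulCoeff, Finset.sum_eq_single (⟨p, hp⟩ : Fin m)]
  · simp [mono]
  · intro i _ hi
    simp [mono, Fin.ext_iff.not.mp hi]
  · simp

lemma skewMulCoeff_mono_right (c : S) {q : ℕ} (hq : q < m) (x : Fin m → S) (e : ℕ) :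
    skewMulCoeff σ x (mono m c q) e
      = ∑ i : Fin m, if (i : ℕ) + q = e then x i * (σ ^ (i : ℕ)) c else 0 := by
  refine Finset.sum_congr rfl fun i _ => ?_
  rw [Finset.sum_eq_single (⟨q, hq⟩ : Fin m)]
  · simp [mono]
  · intro j _ hj
    simp [mono, Fin.ext_iff.not.mp hj]
  · simp

lemma skewMulCoeff_mono_mono (c c' : S) {p q : ℕ} (hp : p < m) (hq : q < m) (e : ℕ) :
    skewMulCoeff σ (mono m c p) (mono m c' q) e
      = if p + q = e then c * (σ ^ p) c' else 0 := by
  rw [skewMulCoeff_mono_left σ c hp, Finset.sum_eq_single (⟨q, hq⟩ : Fin m)]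
  · simp [mono]
  · intro j _ hj
    simp [mono, Fin.ext_iff.not.mp hj]
  · simp

lemma mono_zero_petitMul_constF (hm : 0 < m) (b c : S) (x : Fin m → S) :
    petitMul σ m (constF m b) (mono m c 0) x = c • x := by
  funext d
  have hlt : ∀ j : Fin m, (j : ℕ) ≠ m + d := fun j => by omega
  simp [petitMul_constF_apply σ hm, skewMulCoeff_mono_left σ c hm, Fin.val_inj, hlt]

lemma petitMul_constF_mono_zero_apply (hm : 0 < m) (b c : S) (x : Fin m → S) (d : Fin m) :
    petitMul σ m (constF m b) x (mono m c 0) d = x d * (σ ^ (d : ℕ)) c := by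
  have hlt : ∀ j : Fin m, (j : ℕ) ≠ m + d := fun j => by omega
  simp [petitMul_constF_apply σ hm, skewMulCoeff_mono_right σ c hm, hlt, Fin.val_inj]

/-- `t^s c = σ^s(c) t^s` in `S_a`. -/
lemma petitMul_mono_one_mono_zero (hm : 0 < m) (a c : S) (s : ℕ) :
    petitMul σ m (constF m a) (mono m 1 s) (mono m c 0)
      = petitMul σ m (constF m a) (mono m ((σ ^ s) c) 0) (mono m 1 s) := by
  funext d
  rw [petitMul_constF_mono_zero_apply σ hm, mono_zero_petitMul_constF σ hm]
  by_cases hds : (d : ℕ) = s <;> simp [mono, hds]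

lemma lpow_constF_one (hm : 0 < m) (b : S) (z : Fin m → S) :
    lpow σ m (constF m b) z 1 = z := by
  funext d
  simpa [lpow, pone] using petitMul_constF_mono_zero_apply σ hm b 1 z d

lemma lpow_constF_zero_left (hm : 0 < m) (b : S) {s : ℕ} (hs : 0 < s) :
    lpow σ m (constF m b) 0 s = 0 := by
  obtain ⟨s, rfl⟩ := Nat.exists_eq_add_of_lt hs
  funext d
  simp [lpow, petitMul_constF_apply σ hm, skewMulCoeff]

lemma lpow_constF_mono_one (b : S) {s : ℕ} (hs : s < m) :
    lpow σ m (constF m b) (mono m 1 1) s = mono m 1 s := by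
  induction s with
  | zero => rfl
  | succ s ih =>
    funext d
    have hlt : ¬ 1 + s = m + d := by omega
    simp only [lpow, ih (by omega : s < m), petitMul_constF_apply σ (by omega : 0 < m),
      skewMulCoeff_mono_mono σ 1 1 (by omega : 1 < m) (by omega : s < m), if_neg hlt]
    by_cases hd : (d : ℕ) = s + 1 <;> simp [mono, hd] <;> omega

lemma lpow_constF_mono_one_self (hm : 1 < m) (b : S) :
    lpow σ m (constF m b) (mono m 1 1) m = mono m b 0 := by
  obtain ⟨p, rfl⟩ := Nat.exists_eq_add_of_lt (Nat.zero_lt_of_lt hm)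
  funext d
  rw [lpow, lpow_constF_mono_one σ b (by omega), petitMul_constF_apply σ (by omega),
    skewMulCoeff_mono_mono σ 1 1 hm (by omega), skewMulCoeff_mono_mono σ 1 1 hm (by omega),
    if_neg (by omega)]
  by_cases hd : (d : ℕ) = 0 <;> simp [mono, hd] <;> omega

end Monomials

/-- Over a domain the top coefficient of `L(z,s)` is a product of nonzero terms as long as no
reduction modulo `t^m - b` takes place. -/
lemma lpow_constF_top [IsDomain S] {σ : RingAut S} {m : ℕ} (b : S) {z : Fin m → S} {k : Fin m}
    (hzk : z k ≠ 0) (hk : ∀ i, z i ≠ 0 → i ≤ k) {s : ℕ} (hs : s * k < m) :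
    (∀ j, lpow σ m (constF m b) z s j ≠ 0 → (j : ℕ) ≤ s * k) ∧
      lpow σ m (constF m b) z s ⟨s * k, hs⟩ ≠ 0 := by
  induction s with
  | zero => exact ⟨fun j hj => by simpa [lpow, pone, mono] using hj, by simp [lpow, pone, mono]⟩
  | succ s ih =>
    have hsk : s * k < m := by nlinarith
    obtain ⟨hdeg, htop⟩ := ih hsk
    have hk' : ∀ i, z i ≠ 0 → (i : ℕ) ≤ k := fun i hi => hk i hi
    have hlow : ∀ d : Fin m, lpow σ m (constF m b) z (s + 1) d
        = skewMulCoeff σ z (lpow σ m (constF m b) z s) d := fun d => by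
      rw [lpow, petitMul_constF_apply σ k.pos,
        skewMulCoeff_eq_zero_of_lt (e := m + d) hk' hdeg (by rw [add_mul] at hs; omega),
        zero_mul, add_zero]
    refine ⟨fun j hj => ?_, ?_⟩
    · by_contra! hlt
      exact hj (by rw [hlow, skewMulCoeff_eq_zero_of_lt hk' hdeg (by rw [add_mul] at hlt; omega)])
    · have hidx : (s + 1) * k = (k : ℕ) + (⟨s * k, hsk⟩ : Fin m) := by simp only; ring
      rw [hlow]
      simp only [hidx]
      rw [skewMulCoeff_top hk (q := ⟨s * k, hsk⟩) fun j hj => Fin.le_def.mpr (hdeg j hj)]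
      exact mul_ne_zero hzk ((map_ne_zero_iff _ (σ ^ (k : ℕ)).injective).mpr htop)

lemma top_le_one_of_lpow_modEq [IsDomain S] {σ : RingAut S} {m n : ℕ} (hnm : ¬ n ∣ m) {b : S}
    (hb : b ≠ 0) {z : Fin m → S}
    (hsupp : ∀ s < m, ∀ d : Fin m, lpow σ m (constF m b) z s d ≠ 0 → (d : ℕ) ≡ s [MOD n])
    {k : Fin m} (hzk : z k ≠ 0) (hk : ∀ i, z i ≠ 0 → i ≤ k) : (k : ℕ) ≤ 1 := by
  by_contra! hk2
  have hm := k.pos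
  have hdiv_le := Nat.div_mul_le_self (m - 1) k
  have hlt_div := Nat.lt_div_mul_add (a := m - 1) (b := k) (by omega)
  have hdiv_pos := Nat.div_pos (by omega : (k : ℕ) ≤ m - 1) (by omega)
  generalize (m - 1) / k = Q at hdiv_le hlt_div hdiv_pos
  have hQk : Q * k < m := by omega
  have hQ1 : Q + 1 < m := by have := Nat.mul_le_mul_left Q hk2; omega
  set d := Q * k + k - m
  have hd : d < m := by omega
  set L := lpow σ m (constF m b) z Q
  have hz1 : ∀ i, z i ≠ 0 → (i : ℕ) ≡ 1 [MOD n] := by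
    simpa [lpow_constF_one σ hm] using hsupp 1 (by omega)
  obtain ⟨hLdeg, hLtop⟩ := lpow_constF_top b hzk hk hQk
  have htop : skewMulCoeff σ z L (m + d) ≠ 0 := by
    have hidx : m + d = (k : ℕ) + (⟨Q * k, hQk⟩ : Fin m) := by simp only; omega
    rw [hidx, skewMulCoeff_top hk (q := ⟨Q * k, hQk⟩) fun j hj => Fin.le_def.mpr (hLdeg j hj)]
    exact mul_ne_zero hzk ((map_ne_zero_iff _ (σ ^ (k : ℕ)).injective).mpr hLtop)
  -- the top coefficient of `z L` lands in degree `d` of `L(z,Q+1)`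
  have hdQ : d ≡ Q + 1 [MOD n] := by
    by_contra hne
    refine hne (hsupp (Q + 1) hQ1 ⟨d, hd⟩ ?_)
    rw [lpow, petitMul_constF_apply σ hm, skewMulCoeff_eq_zero_of_modEq hz1
      (hsupp Q (by omega)) (by rwa [add_comm]), zero_add]
    exact mul_ne_zero htop ((map_ne_zero_iff _ (σ ^ d).injective).mpr hb)
  have hmd : m + d ≡ 0 + d [MOD n] := by
    have hkQ : (Q + 1) * k ≡ Q + 1 [MOD n] := by simpa using (hz1 k hzk).mul_left (Q + 1)
    rw [zero_add, show m + d = (Q + 1) * k by rw [add_mul]; omega]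
    exact hkQ.trans hdQ.symm
  exact hnm (Nat.modEq_zero_iff_dvd.mp (Nat.ModEq.add_right_cancel' d hmd))

lemma exists_top_coeff {m : ℕ} {z : Fin m → S} (hz : z ≠ 0) :
    ∃ k, z k ≠ 0 ∧ ∀ i, z i ≠ 0 → i ≤ k := by
  classical
  obtain ⟨i, hi⟩ := Function.ne_iff.mp hz
  obtain ⟨k, hk, hmax⟩ := Finset.exists_max_image (Finset.univ.filter (z · ≠ 0)) id
    ⟨i, by simpa using hi⟩
  exact ⟨k, (Finset.mem_filter.mp hk).2, fun j hj => hmax j (by simpa using hj)⟩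

lemma eq_mono_of_forall_ne_zero {m : ℕ} {z : Fin m → S} {k : Fin m}
    (h : ∀ i, z i ≠ 0 → i = k) : z = mono m (z k) k := by
  funext i
  simp only [mono]
  split_ifs with hi
  · rw [Fin.ext hi]
  · by_contra hne
    exact hi (congrArg Fin.val (h i hne))

namespace IsPetitHom

variable {σ : RingAut S} {m : ℕ} {f₀ g₀ : Fin m → S} {G : (Fin m → S) → (Fin m → S)}

lemma map_zero (hG : IsPetitHom σ m f₀ g₀ G) : G 0 = 0 := by
  simpa using hG.1 0 0

lemma map_lpow (hG : IsPetitHom σ m f₀ g₀ G) (x : Fin m → S) (s : ℕ) :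
    G (lpow σ m f₀ x s) = lpow σ m g₀ (G x) s := by
  induction s with
  | zero => exact hG.2.2
  | succ s ih => rw [lpow, hG.2.1, ih, lpow]

variable {τ : RingAut S} {a b : S}

lemma map_mono_one_ne_zero (hG : IsPetitHom σ m (constF m a) (constF m b) G)
    (hres : ∀ c : S, G (mono m c 0) = mono m (τ c) 0) (hm : 1 < m) (ha : a ≠ 0) :
    G (mono m 1 1) ≠ 0 := by
  intro hz
  have h := hG.map_lpow (mono m 1 1) m
  rw [lpow_constF_mono_one_self σ hm, hres, hz, lpow_constF_zero_left σ (by omega) b (by omega)]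
    at h
  simpa [mono, ha] using congrFun h ⟨0, by omega⟩

/-- The image of `t^s c = σ^s(c) t^s` under `G` reads
`L(G t, s)_d σ^d(τ c) = σ^s(τ c) L(G t, s)_d`, and `τ` is onto. -/
lemma lpow_apply_modEq_orderOf [IsDomain S] (hG : IsPetitHom σ m (constF m a) (constF m b) G)
    (hres : ∀ c : S, G (mono m c 0) = mono m (τ c) 0) (hcomm : ∀ x, τ (σ x) = σ (τ x))
    (hm : 0 < m) {s : ℕ} (hs : s < m) {d : Fin m}
    (hd : lpow σ m (constF m b) (G (mono m 1 1)) s d ≠ 0) : (d : ℕ) ≡ s [MOD orderOf σ] := by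
  have hτσ : Commute τ (σ ^ s) := Commute.pow_right (RingEquiv.ext hcomm) s
  refine pow_eq_pow_iff_modEq.mp (RingEquiv.ext fun e => ?_)
  obtain ⟨c, rfl⟩ := τ.surjective e
  have h := congrFun (congrArg G (petitMul_mono_one_mono_zero σ hm a c s)) d
  rw [hG.2.1, hG.2.1, hres, hres, ← lpow_constF_mono_one σ a hs, hG.map_lpow,
    petitMul_constF_mono_zero_apply σ hm, mono_zero_petitMul_constF σ hm,
    Pi.smul_apply, smul_eq_mul, show τ ((σ ^ s) c) = (σ ^ s) (τ c) from
      DFunLike.congr_fun hτσ.eq c] at h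
  exact mul_left_cancel₀ hd (by rw [h, mul_comm])

end IsPetitHom

end PetitFormal

theorem stmt16_general {S : Type*} [CommRing S] [IsDomain S] (σ τ : RingAut S)
    (n : ℕ) (hn : orderOf σ = n) (m : ℕ) (hm : 0 < m)
    (hnm : ¬ n ∣ m) (hcomm : ∀ x, τ (σ x) = σ (τ x)) (a b : Sˣ)
    (G : (Fin m → S) → (Fin m → S))
    (hhom : IsPetitHom σ m (constF m (a : S)) (constF m (b : S)) G)
    (hres : ∀ c : S, G (mono m c 0) = mono m (τ c) 0) :
    ∃ α : S, α ≠ 0 ∧ G (mono m 1 1) = mono m α 1 := by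
  subst hn
  obtain rfl | h1m : m = 1 ∨ 1 < m := by omega
  · refine ⟨1, one_ne_zero, ?_⟩
    have ht : mono 1 (1 : S) 1 = 0 := funext fun i => by simp [mono]
    rw [ht, hhom.map_zero]
  set z := G (mono m 1 1)
  have hsupp : ∀ s < m, ∀ d : Fin m,
      lpow σ m (constF m (b : S)) z s d ≠ 0 → (d : ℕ) ≡ s [MOD orderOf σ] :=
    fun s hs d hd => hhom.lpow_apply_modEq_orderOf hres hcomm hm hs hd
  have hz1 : ∀ i, z i ≠ 0 → (i : ℕ) ≡ 1 [MOD orderOf σ] := by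
    simpa [lpow_constF_one σ hm] using hsupp 1 h1m
  obtain ⟨k, hzk, hk⟩ := exists_top_coeff (hhom.map_mono_one_ne_zero hres h1m a.ne_zero)
  have hk1 := top_le_one_of_lpow_modEq hnm b.ne_zero hsupp hzk hk
  have hdeg : ∀ i, z i ≠ 0 → (i : ℕ) = 1 := fun i hi => by
    have := Fin.le_def.mp (hk i hi)
    obtain h0 | h1 : (i : ℕ) = 0 ∨ (i : ℕ) = 1 := by omega
    · have h01 := hz1 i hi
      rw [h0] at h01
      exact absurd ((Nat.modEq_zero_iff_dvd.mp h01.symm).trans (one_dvd m)) hnm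
    · exact h1
  refine ⟨z k, hzk, ?_⟩
  calc z = mono m (z k) k := eq_mono_of_forall_ne_zero fun i hi =>
        Fin.ext ((hdeg i hi).trans (hdeg k hzk).symm)
    _ = mono m (z k) 1 := by rw [hdeg k hzk]

/-- Corollary `c:new`: over an integral domain, if `n ∤ m` then every nonzero
homomorphism `G : S_a → S_b` with `G|_S = τ` commuting with `σ` is monomial of
degree one: `G(t) = α t` for some nonzero `α ∈ S`. -/
theorem stmt16 {S : Type*} [CommRing S] [IsDomain S] (σ τ : RingAut S)
    (n : ℕ) (hn : orderOf σ = n) (hn0 : 0 < n) (m : ℕ) (hm : 0 < m)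
    (hnm : ¬ n ∣ m) (hcomm : ∀ x, τ (σ x) = σ (τ x)) (a b : Sˣ)
    (G : (Fin m → S) → (Fin m → S))
    (hhom : IsPetitHom σ m (constF m (a : S)) (constF m (b : S)) G)
    (hres : ∀ c : S, G (mono m c 0) = mono m (τ c) 0) :
    ∃ α : S, α ≠ 0 ∧ G (mono m 1 1) = mono m α 1 :=
  stmt16_general σ τ n hn m hm hnm hcomm a b G hhom hres
end
end
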